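/- Let p be an odd prime and g ∈ Z[X]. The number of pairs (x,y) with 1 ≤ x,y ≤ p(p-1), p ∤ xy, satisfying x^(g(x)) ≡ y (mod p) and y^(g(y)) ≡ x (mod p) equals Σ_{x0=1}^{p-1} Σ_{y0=1}^{p-1} gcd(p-1, g(x0)g(y0) − 1). -/

import Mathlib

/-!
Since `a ^ (p - 1) = 1` for `a ≠ 0` in `ZMod p`, both congruences depend only on `x, y` modulo `p`
and, through the exponents `g x, g y`, modulo `p - 1`. By the Chinese remainder theorem,
`[1, p (p - 1)]` meets each residue class `x₀` modulo `p - 1` in a complete residue system modulo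
`p`, so the pairs with `x ≡ x₀`, `y ≡ y₀` correspond to the pairs `(a, b)` of nonzero residues with
`a ^ g(x₀) = b` and `b ^ g(y₀) = a`. Such a pair is determined by `a`, subject only to
`a ^ (g(x₀) g(y₀) - 1) = 1`, and in the cyclic group `(ZMod p)ˣ` of order `p - 1` this equation has
`gcd (p - 1, g(x₀) g(y₀) - 1)` solutions.
-/

open Finset

theorem FiniteField.card_filter_ne_zero_zpow_eq_one {K : Type*} [Field K] [Fintype K]
    [DecidableEq K] (M : ℤ) :
    #{a : K | a ≠ 0 ∧ a ^ M = 1} = Int.gcd ((Fintype.card K : ℤ) - 1) M := by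
  have hunits : #{u : Kˣ | u ^ M.natAbs = 1} = #{a : K | a ≠ 0 ∧ a ^ M = 1} := by
    apply card_nbij Units.val
    · intro u hu
      simp only [coe_filter, mem_univ, true_and, Set.mem_ofPred_eq, pow_natAbs_eq_one] at hu ⊢
      exact ⟨u.ne_zero, by rw [← Units.val_zpow_eq_zpow_val, hu, Units.val_one]⟩
    · exact Units.val_injective.injOn
    · intro a ha
      simp only [coe_filter, mem_univ, true_and, Set.mem_ofPred_eq] at ha
      refine ⟨Units.mk0 a ha.1, ?_, rfl⟩
      simp only [coe_filter, mem_univ, true_and, Set.mem_ofPred_eq, pow_natAbs_eq_one]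
      exact Units.val_injective (by simpa [Units.val_zpow_eq_zpow_val] using ha.2)
  have hker :
      Nat.card (powMonoidHom M.natAbs : Kˣ →* Kˣ).ker = #{u : Kˣ | u ^ M.natAbs = 1} := by
    rw [← Fintype.card_subtype, ← Nat.card_eq_fintype_card]
    rfl
  have hcard : (Fintype.card K : ℤ) - 1 = ((Nat.card K - 1 : ℕ) : ℤ) := by
    have := Fintype.card_pos (α := K)
    rw [Nat.card_eq_fintype_card]
    omega
  rw [← hunits, ← hker, IsCyclic.card_powMonoidHom_ker, Nat.card_units, hcard, Int.gcd]
  rfl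

theorem zpow_eq_zpow_of_modEq {G₀ : Type*} [GroupWithZero G₀] {a : G₀} (ha : a ≠ 0) {n : ℕ}
    (han : a ^ n = 1) {k l : ℤ} (h : k ≡ l [ZMOD n]) : a ^ k = a ^ l := by
  obtain ⟨c, hc⟩ := Int.modEq_iff_dvd.1 h
  rw [show l = k + n * c by omega, zpow_add₀ ha, zpow_mul, zpow_natCast, han, one_zpow,
    mul_one]

theorem Int.ModEq.eval {n a b : ℤ} (h : a ≡ b [ZMOD n]) (f : Polynomial ℤ) :
    f.eval a ≡ f.eval b [ZMOD n] :=
  Int.modEq_iff_dvd.2 <| (Int.modEq_iff_dvd.1 h).trans (Polynomial.sub_dvd_eval_sub _ _ f)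

theorem ZMod.bijOn_natCast_Icc (n : ℕ) [NeZero n] :
    Set.BijOn (Nat.cast : ℕ → ZMod n) (Set.Icc 1 n) Set.univ := by
  refine ⟨Set.mapsTo_univ _ _, fun a ha b hb hab => ?_, fun u _ => ?_⟩
  · refine ((ZMod.natCast_eq_natCast_iff a b n).1 hab).eq_of_abs_lt ?_
    simp only [Set.mem_Icc] at ha hb
    rw [abs_sub_lt_iff]
    omega
  · refine ⟨(u - 1).val + 1, ?_, by simp⟩
    have := ZMod.val_lt (u - 1)
    simp only [Set.mem_Icc]
    omega

theorem ZMod.bijOn_natCast_filter_Icc_mul_modEq {m n : ℕ} [NeZero m] [NeZero n]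
    (hmn : m.Coprime n) (x0 : ℕ) :
    Set.BijOn (Nat.cast : ℕ → ZMod m) ↑{x ∈ Icc 1 (m * n) | x ≡ x0 [MOD n]} Set.univ := by
  have hbij := ZMod.bijOn_natCast_Icc (m * n)
  rw [← coe_Icc] at hbij
  refine ⟨Set.mapsTo_univ _ _, fun x hx y hy hxy => ?_, fun a _ => ?_⟩
  · rw [coe_filter] at hx hy
    refine hbij.injOn hx.1 hy.1 ((ZMod.natCast_eq_natCast_iff _ _ _).2 ?_)
    exact (Nat.modEq_and_modEq_iff_modEq_mul hmn).1
      ⟨(ZMod.natCast_eq_natCast_iff _ _ _).1 hxy, hx.2.trans hy.2.symm⟩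
  · obtain ⟨k, hka, hkx0⟩ := Nat.chineseRemainder hmn a.val x0
    obtain ⟨x, hx, hxk⟩ := hbij.surjOn (Set.mem_univ (k : ZMod (m * n)))
    have hxk := (ZMod.natCast_eq_natCast_iff _ _ _).1 hxk
    refine ⟨x, by rw [coe_filter]; exact ⟨hx, (Nat.ModEq.of_mul_left m hxk).trans hkx0⟩, ?_⟩
    rw [(ZMod.natCast_eq_natCast_iff _ _ _).2 ((Nat.ModEq.of_mul_right n hxk).trans hka),
      ZMod.natCast_zmod_val]

theorem Finset.card_eq_sum_card_filter_modEq {ι : Type*} (s : Finset ι) (f : ι → ℕ) (n : ℕ)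
    [NeZero n] : #s = ∑ x0 ∈ Icc 1 n, #{i ∈ s | f i ≡ x0 [MOD n]} := by
  classical
  rw [card_eq_sum_card_fiberwise (f := fun i => (f i : ZMod n)) (t := univ)
    fun _ _ => mem_univ _]
  have hbij := ZMod.bijOn_natCast_Icc n
  rw [← coe_Icc] at hbij
  refine (sum_nbij Nat.cast (fun _ _ => mem_univ _) hbij.injOn
    (by simpa using hbij.surjOn) fun x0 _ => ?_).symm
  simp only [ZMod.natCast_eq_natCast_iff]

theorem Finset.card_filter_comp_of_bijOn {α β : Type*} [Fintype β] {s : Finset α} {f : α → β}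
    (hf : Set.BijOn f s Set.univ) (Q : β → Prop) [DecidablePred Q] :
    #{a ∈ s | Q (f a)} = #{b | Q b} := by
  apply card_nbij f
  · intro a ha
    simp only [coe_filter, mem_univ, true_and, Set.mem_ofPred_eq] at ha ⊢
    exact ha.2
  · exact hf.injOn.mono (coe_subset.2 (filter_subset _ _))
  · intro b hb
    simp only [coe_filter, mem_univ, true_and, Set.mem_ofPred_eq] at hb
    obtain ⟨a, ha, rfl⟩ := hf.surjOn (Set.mem_univ b)
    exact ⟨a, by simp only [coe_filter, Set.mem_ofPred_eq]; exact ⟨ha, hb⟩, rfl⟩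

def IsTwoCycle {G₀ : Type*} [GroupWithZero G₀] (k l : ℤ) (a b : G₀) : Prop :=
  a ≠ 0 ∧ b ≠ 0 ∧ a ^ k = b ∧ b ^ l = a

instance {G₀ : Type*} [GroupWithZero G₀] [DecidableEq G₀] (k l : ℤ) (a b : G₀) :
    Decidable (IsTwoCycle k l a b) :=
  inferInstanceAs (Decidable (_ ∧ _))

theorem card_isTwoCycle {G₀ : Type*} [GroupWithZero G₀] [Fintype G₀] [DecidableEq G₀]
    (k l : ℤ) :
    #{ab : G₀ × G₀ | IsTwoCycle k l ab.1 ab.2} = #{a : G₀ | a ≠ 0 ∧ a ^ (k * l - 1) = 1} := by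
  have hfix : ∀ a : G₀, a ≠ 0 → (a ^ (k * l) = a ↔ a ^ (k * l - 1) = 1) := fun a ha => by
    rw [zpow_sub_one₀ ha, mul_inv_eq_one₀ ha]
  apply card_nbij' Prod.fst (fun a => (a, a ^ k)) <;>
    simp only [Set.MapsTo, Set.LeftInvOn, Set.RightInvOn, coe_filter, mem_univ, true_and,
      Set.mem_ofPred_eq, Prod.forall, implies_true]
  · rintro a b ⟨ha, -, rfl, hba⟩
    exact ⟨ha, (hfix a ha).1 (by rw [zpow_mul, hba])⟩
  · rintro a ⟨ha, h⟩
    exact ⟨ha, zpow_ne_zero k ha, rfl, by rw [← zpow_mul, (hfix a ha).2 h]⟩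
  · rintro a b ⟨-, -, rfl, -⟩
    rfl

instance {p : ℕ} [Fact p.Prime] : NeZero (p - 1) :=
  ⟨(Nat.sub_pos_of_lt (Fact.out : p.Prime).one_lt).ne'⟩

section TwoCycleCongruence

variable {p : ℕ} [Fact p.Prime] (g : Polynomial ℤ)

theorem isTwoCycle_iff_of_modEq {x y x0 y0 : ℕ} (hx : x ≡ x0 [MOD p - 1])
    (hy : y ≡ y0 [MOD p - 1]) :
    IsTwoCycle (g.eval (x0 : ℤ)) (g.eval (y0 : ℤ)) (x : ZMod p) (y : ZMod p) ↔
      ¬ p ∣ x ∧ ¬ p ∣ y ∧ (x : ZMod p) ^ g.eval (x : ℤ) = y ∧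
        (y : ZMod p) ^ g.eval (y : ℤ) = x := by
  have hexp : ∀ {z z0 : ℕ}, z ≡ z0 [MOD p - 1] → ∀ a : ZMod p, a ≠ 0 →
      a ^ g.eval (z : ℤ) = a ^ g.eval (z0 : ℤ) := fun hz a ha =>
    zpow_eq_zpow_of_modEq ha (ZMod.pow_card_sub_one_eq_one ha)
      ((Int.natCast_modEq_iff.2 hz).eval g)
  simp only [IsTwoCycle, ← ZMod.natCast_eq_zero_iff, Ne]
  refine and_congr_right fun hx0 => and_congr_right fun hy0 => ?_
  rw [hexp hx _ hx0, hexp hy _ hy0]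

theorem card_filter_modEq_eq_card_isTwoCycle (x0 y0 : ℕ) :
    #{xy ∈ Icc 1 (p * (p - 1)) ×ˢ Icc 1 (p * (p - 1)) |
        (¬ p ∣ xy.1 ∧ ¬ p ∣ xy.2 ∧ (xy.1 : ZMod p) ^ g.eval (xy.1 : ℤ) = xy.2 ∧
          (xy.2 : ZMod p) ^ g.eval (xy.2 : ℤ) = xy.1) ∧
        xy.1 ≡ x0 [MOD p - 1] ∧ xy.2 ≡ y0 [MOD p - 1]} =
      #{ab : ZMod p × ZMod p | IsTwoCycle (g.eval (x0 : ℤ)) (g.eval (y0 : ℤ)) ab.1 ab.2} := by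
  have hp := (Fact.out : p.Prime)
  have hcop : p.Coprime (p - 1) :=
    (Nat.coprime_self_sub_right hp.one_le).2 (Nat.coprime_one_right p)
  have hbij := (ZMod.bijOn_natCast_filter_Icc_mul_modEq hcop x0).prodMap
    (ZMod.bijOn_natCast_filter_Icc_mul_modEq hcop y0)
  rw [Set.univ_prod_univ, ← coe_product] at hbij
  rw [filter_congr fun xy _ => (and_comm.trans (and_congr_right fun h =>
    (isTwoCycle_iff_of_modEq g h.1 h.2).symm)), ← filter_filter,
    filter_product (fun x => x ≡ x0 [MOD p - 1]) (fun y => y ≡ y0 [MOD p - 1])]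
  exact card_filter_comp_of_bijOn hbij fun ab => IsTwoCycle _ _ ab.1 ab.2

end TwoCycleCongruence

theorem stmt_14_general (p : ℕ) [Fact p.Prime] (g : Polynomial ℤ) :
    (((Finset.Icc 1 (p * (p - 1))) ×ˢ (Finset.Icc 1 (p * (p - 1)))).filter
        fun xy : ℕ × ℕ => ¬ p ∣ xy.1 ∧ ¬ p ∣ xy.2 ∧
          (xy.1 : ZMod p) ^ (g.eval (xy.1 : ℤ)) = (xy.2 : ZMod p) ∧
          (xy.2 : ZMod p) ^ (g.eval (xy.2 : ℤ)) = (xy.1 : ZMod p)).card =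
      ∑ x0 ∈ Finset.Icc 1 (p - 1), ∑ y0 ∈ Finset.Icc 1 (p - 1),
        Int.gcd ((p : ℤ) - 1) (g.eval (x0 : ℤ) * g.eval (y0 : ℤ) - 1) := by
  rw [card_eq_sum_card_filter_modEq _ Prod.fst (p - 1)]
  refine sum_congr rfl fun x0 _ => ?_
  rw [card_eq_sum_card_filter_modEq _ Prod.snd (p - 1)]
  refine sum_congr rfl fun y0 _ => ?_
  rw [filter_filter, filter_filter, card_filter_modEq_eq_card_isTwoCycle, card_isTwoCycle,
    FiniteField.card_filter_ne_zero_zpow_eq_one, ZMod.card]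

theorem stmt_14 (p : ℕ) [Fact p.Prime] (hp2 : p ≠ 2) (g : Polynomial ℤ) :
    (((Finset.Icc 1 (p * (p - 1))) ×ˢ (Finset.Icc 1 (p * (p - 1)))).filter
        fun xy : ℕ × ℕ => ¬ p ∣ xy.1 ∧ ¬ p ∣ xy.2 ∧
          (xy.1 : ZMod p) ^ (g.eval (xy.1 : ℤ)) = (xy.2 : ZMod p) ∧
          (xy.2 : ZMod p) ^ (g.eval (xy.2 : ℤ)) = (xy.1 : ZMod p)).card =
      ∑ x0 ∈ Finset.Icc 1 (p - 1), ∑ y0 ∈ Finset.Icc 1 (p - 1),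
        Int.gcd ((p : ℤ) - 1) (g.eval (x0 : ℤ) * g.eval (y0 : ℤ) - 1) :=
  stmt_14_general p g
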